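/- arXiv:1510.06654 — 5 statements merged into one kernel-verified Lean document; each statement's English description precedes it below -/
import Mathlib

section
/- The determinant of the 2×2 complex matrix L with entries L₁₁ = cot(δ/2)·(l/s) + tan(δ/2)·l·s₁, L₁₂ = i(λ − s·s₁/λ), L₂₁ = i(λ − 1/(λ·s·s₁)), L₂₂ = cot(δ/2)·(s/l) + tan(δ/2)/(l·s₁) equals λ² + 1/λ² + tan²(δ/2) + cot²(δ/2). -/
open Complex Matrix

theorem Complex.tan_mul_cot {z : ℂ} (hcos : cos z ≠ 0) (hsin : sin z ≠ 0) :
    tan z * cot z = 1 := by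
  rw [tan_eq_sin_div_cos, cot_eq_cos_div_sin]
  field_simp

section LaxDeterminant

variable {K : Type*} [Field K]

theorem laxMatrix_diag_mul {t c l s s₁ : K} (htc : t * c = 1) (hl : l ≠ 0) (hs : s ≠ 0)
    (hs₁ : s₁ ≠ 0) :
    (c * (l / s) + t * l * s₁) * (c * (s / l) + t / (l * s₁)) =
      t ^ 2 + c ^ 2 + s * s₁ + 1 / (s * s₁) := by
  field_simp
  linear_combination (1 + (s * s₁) ^ 2) * htc

theorem laxMatrix_offDiag_mul {lam s s₁ : K} (hlam : lam ≠ 0) (hs : s ≠ 0) (hs₁ : s₁ ≠ 0) :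
    (lam - s * s₁ / lam) * (lam - 1 / (lam * s * s₁)) =
      lam ^ 2 + 1 / lam ^ 2 - (s * s₁ + 1 / (s * s₁)) := by
  field_simp
  ring

end LaxDeterminant

/-- determinant of the cK-net Lax matrix `L`. -/
theorem stmt_0 (lam l s s₁ δ : ℂ) (hlam : lam ≠ 0) (hl : l ≠ 0) (hs : s ≠ 0)
    (hs₁ : s₁ ≠ 0) (hcos : Complex.cos (δ / 2) ≠ 0) (hsin : Complex.sin (δ / 2) ≠ 0) :
    (!![Complex.cot (δ / 2) * (l / s) + Complex.tan (δ / 2) * l * s₁,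
        I * (lam - s * s₁ / lam);
        I * (lam - 1 / (lam * s * s₁)),
        Complex.cot (δ / 2) * (s / l) + Complex.tan (δ / 2) / (l * s₁)]).det =
      lam ^ 2 + 1 / lam ^ 2 + Complex.tan (δ / 2) ^ 2 + Complex.cot (δ / 2) ^ 2 := by
  rw [det_fin_two_of, mul_mul_mul_comm, I_mul_I,
    laxMatrix_diag_mul (tan_mul_cot hcos hsin) hl hs hs₁,
    laxMatrix_offDiag_mul hlam hs hs₁]
  ring
end

section
/- For each fixed k, the four points f(k,ℓ), f(k+1,ℓ), f(k,ℓ+1), f(k+1,ℓ+1) of the discrete pseudosphere f(k,ℓ) = (εk − tanh(τk), cos(ℓφ)·sech(τk), sin(ℓφ)·sech(τk)), with τ = log((2+ε)/(2−ε)) and 0 < ε < 2, lie on a common circle (are concircular, i.e., coplanar and equidistant from a common point). -/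
/-!
Write the vertices as points `(a, s cos θ, s sin θ)` of a surface of revolution. Two parallel
circles of revolution at different heights `a₁ ≠ a₂` lie on one sphere centred on the axis, and the
quad spanned by two meridians (angles `θ₁`, `θ₂`) is symmetric under the reflection in the plane
through the axis at angle `(θ₁ + θ₂) / 2`, hence planar. A plane cuts a sphere in a circle centred
at the foot of the perpendicular from the sphere's centre.

For the pseudosphere, `exp τ = (2 + ε) / (2 - ε)` means `ε = 2 tanh (τ / 2)`, the maximum of
`tanh (x + τ) - tanh x`, attained only at `x = -τ / 2`. So consecutive heights
`ε k - tanh (τ k)` differ, since `τ k ≠ -τ / 2` for integer `k`.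
-/

/-- Euclidean dot product on `ℝ³`. -/
def dot3 (u v : Fin 3 → ℝ) : ℝ := u 0 * v 0 + u 1 * v 1 + u 2 * v 2

/-- The discrete pseudosphere of revolution. -/
noncomputable def fPseudo (ε φ τ : ℝ) (k ℓ : ℤ) : Fin 3 → ℝ :=
  ![ε * k - Real.tanh (τ * k),
    Real.cos (ℓ * φ) * (1 / Real.cosh (τ * k)),
    Real.sin (ℓ * φ) * (1 / Real.cosh (τ * k))]

open Real

lemma dot3_eq_dotProduct (u v : Fin 3 → ℝ) : dot3 u v = u ⬝ᵥ v := by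
  simp [dot3, dotProduct, Fin.sum_univ_three]

lemma exists_foot_dotProduct_sub_self {K ι : Type*} [Field K] [Fintype ι] (o w p₀ : ι → K)
    (hw : w ⬝ᵥ w ≠ 0) :
    ∃ (c : ι → K) (δ : K), w ⬝ᵥ (c - p₀) = 0 ∧
      ∀ p, w ⬝ᵥ (p - p₀) = 0 → (p - c) ⬝ᵥ (p - c) = (p - o) ⬝ᵥ (p - o) - δ := by
  set t := w ⬝ᵥ (o - p₀) / w ⬝ᵥ w
  have hwt : t * w ⬝ᵥ w = w ⬝ᵥ (o - p₀) := div_mul_cancel₀ _ hw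
  refine ⟨o - t • w, t ^ 2 * w ⬝ᵥ w, ?_, fun p hp => ?_⟩
  · rw [sub_right_comm, dotProduct_sub, dotProduct_smul, smul_eq_mul, hwt, sub_self]
  · have hpo : w ⬝ᵥ (p - o) = -(t * w ⬝ᵥ w) := by
      rw [hwt, ← sub_sub_sub_cancel_right p o p₀, dotProduct_sub, hp, zero_sub]
    rw [sub_sub_eq_add_sub, add_sub_right_comm]
    simp only [add_dotProduct, dotProduct_add, smul_dotProduct, dotProduct_smul, smul_eq_mul,
      dotProduct_comm (p - o) w, hpo]
    ring

def Concircular (p₁ p₂ p₃ p₄ : Fin 3 → ℝ) : Prop :=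
  ∃ (c w : Fin 3 → ℝ) (r : ℝ), w ≠ 0 ∧
    dot3 (p₁ - c) (p₁ - c) = r ^ 2 ∧ dot3 (p₂ - c) (p₂ - c) = r ^ 2 ∧
    dot3 (p₃ - c) (p₃ - c) = r ^ 2 ∧ dot3 (p₄ - c) (p₄ - c) = r ^ 2 ∧
    dot3 w (p₂ - p₁) = 0 ∧ dot3 w (p₃ - p₁) = 0 ∧ dot3 w (p₄ - p₁) = 0 ∧ dot3 w (c - p₁) = 0

lemma concircular_of_mem_sphere_of_mem_plane {p₁ p₂ p₃ p₄ o w : Fin 3 → ℝ} {R d : ℝ}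
    (hw : w ≠ 0) (hsphere : ∀ p ∈ [p₁, p₂, p₃, p₄], dot3 (p - o) (p - o) = R)
    (hplane : ∀ p ∈ [p₁, p₂, p₃, p₄], dot3 w p = d) : Concircular p₁ p₂ p₃ p₄ := by
  simp only [dot3_eq_dotProduct] at hsphere hplane
  obtain ⟨c, δ, hc, hfoot⟩ :=
    exists_foot_dotProduct_sub_self o w p₁ (dotProduct_self_eq_zero.not.mpr hw)
  have hplane₁ : ∀ p ∈ [p₁, p₂, p₃, p₄], w ⬝ᵥ (p - p₁) = 0 := fun p hp => by
    rw [dotProduct_sub, hplane p hp, hplane p₁ (by simp), sub_self]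
  have hcircle : ∀ p ∈ [p₁, p₂, p₃, p₄], (p - c) ⬝ᵥ (p - c) = R - δ := fun p hp => by
    rw [hfoot p (hplane₁ p hp), hsphere p hp]
  have hr : √(R - δ) ^ 2 = R - δ := by
    refine sq_sqrt ?_
    rw [← hcircle p₁ (by simp)]
    simpa using dotProduct_self_star_nonneg (p₁ - c)
  refine ⟨c, w, √(R - δ), hw, ?_⟩
  simp only [dot3_eq_dotProduct, hr, hc, List.mem_cons, List.not_mem_nil, or_false, true_or,
    or_true, hcircle, hplane₁, and_self]

noncomputable def revolve (a s θ : ℝ) : Fin 3 → ℝ := ![a, cos θ * s, sin θ * s]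

lemma dot3_revolve (w : Fin 3 → ℝ) (a s θ : ℝ) :
    dot3 w (revolve a s θ) = w 0 * a + s * (w 1 * cos θ + w 2 * sin θ) := by
  simp only [dot3, revolve, Matrix.cons_val_zero, Matrix.cons_val_one, Matrix.cons_val_two,
    Matrix.head_cons, Matrix.tail_cons]
  ring

lemma dot3_revolve_sub_axis (a s θ x : ℝ) :
    dot3 (revolve a s θ - ![x, 0, 0]) (revolve a s θ - ![x, 0, 0]) = (a - x) ^ 2 + s ^ 2 := by
  simp only [dot3, revolve, Pi.sub_apply, Matrix.cons_val_zero, Matrix.cons_val_one,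
    Matrix.cons_val_two, Matrix.head_cons, Matrix.tail_cons]
  linear_combination s ^ 2 * cos_sq_add_sin_sq θ

theorem concircular_revolve (a₁ a₂ s₁ s₂ θ₁ θ₂ : ℝ) (ha : a₁ ≠ a₂) :
    Concircular (revolve a₁ s₁ θ₁) (revolve a₂ s₂ θ₁) (revolve a₁ s₁ θ₂) (revolve a₂ s₂ θ₂) := by
  have ha' : a₂ - a₁ ≠ 0 := sub_ne_zero.mpr ha.symm
  obtain ⟨x, hx⟩ : ∃ x, (a₁ - x) ^ 2 + s₁ ^ 2 = (a₂ - x) ^ 2 + s₂ ^ 2 := by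
    refine ⟨(a₂ ^ 2 + s₂ ^ 2 - a₁ ^ 2 - s₁ ^ 2) / (2 * (a₂ - a₁)), ?_⟩
    field_simp
    ring
  set m := (θ₁ + θ₂) / 2
  set h := (θ₂ - θ₁) / 2
  set w : Fin 3 → ℝ := ![(s₂ - s₁) * cos h, -((a₂ - a₁) * cos m), -((a₂ - a₁) * sin m)]
  have hw : ∀ a s θ,
      dot3 w (revolve a s θ) = (s₂ - s₁) * cos h * a - (a₂ - a₁) * s * cos (θ - m) := by
    intro a s θ
    rw [dot3_revolve, cos_sub]
    simp only [w, Matrix.cons_val_zero, Matrix.cons_val_one, Matrix.cons_val_two,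
      Matrix.head_cons, Matrix.tail_cons]
    ring
  have hθ₁ : cos (θ₁ - m) = cos h := by rw [← cos_neg]; congr 1; ring
  have hθ₂ : cos (θ₂ - m) = cos h := by congr 1; ring
  refine concircular_of_mem_sphere_of_mem_plane (o := ![x, 0, 0]) (R := (a₁ - x) ^ 2 + s₁ ^ 2)
    (d := cos h * (a₁ * s₂ - a₂ * s₁)) (w := w) ?_ ?_ ?_
  · intro hw0
    have h₁ : (a₂ - a₁) * cos m = 0 := by simpa [w] using congrFun hw0 1
    have h₂ : (a₂ - a₁) * sin m = 0 := by simpa [w] using congrFun hw0 2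
    exact ha' (by linear_combination cos m * h₁ + sin m * h₂ - (a₂ - a₁) * cos_sq_add_sin_sq m)
  · simp only [List.mem_cons, List.not_mem_nil, or_false]
    rintro p (rfl | rfl | rfl | rfl) <;> simp only [dot3_revolve_sub_axis, hx]
  · simp only [List.mem_cons, List.not_mem_nil, or_false]
    rintro p (rfl | rfl | rfl | rfl) <;> rw [hw] <;> simp only [hθ₁, hθ₂] <;> ring

lemma sub_tanh_add_sub_tanh (x τ : ℝ) :
    2 * (exp τ - 1) / (exp τ + 1) - (tanh (x + τ) - tanh x) =
      2 * (exp τ - 1) * (exp x ^ 2 * exp τ - 1) ^ 2 /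
        ((exp τ + 1) * ((exp x * exp τ) ^ 2 + 1) * (exp x ^ 2 + 1)) := by
  simp only [tanh_eq, exp_neg, exp_add]
  field_simp
  ring

lemma tanh_add_sub_tanh_ne {x τ : ℝ} (hτ : τ ≠ 0) (hx : 2 * x + τ ≠ 0) :
    tanh (x + τ) - tanh x ≠ 2 * (exp τ - 1) / (exp τ + 1) := by
  rw [ne_comm, ← sub_ne_zero, sub_tanh_add_sub_tanh]
  have hτ' : exp τ - 1 ≠ 0 := sub_ne_zero.mpr (exp_eq_one_iff τ |>.not.mpr hτ)
  have hx' : exp x ^ 2 * exp τ - 1 ≠ 0 := by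
    rw [sq, ← exp_add, ← exp_add, ← two_mul]
    exact sub_ne_zero.mpr (exp_eq_one_iff _ |>.not.mpr hx)
  positivity

lemma profile_succ_ne {ε τ : ℝ} (hτ : τ ≠ 0) (hε : ε = 2 * (exp τ - 1) / (exp τ + 1)) (k : ℤ) :
    ε * ↑(k + 1) - tanh (τ * ↑(k + 1)) ≠ ε * k - tanh (τ * k) := by
  have hk : (2 * k + 1 : ℝ) ≠ 0 := by exact_mod_cast (by omega : 2 * k + 1 ≠ 0)
  push_cast
  rw [show τ * (k + 1) = τ * k + τ by ring]
  intro h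
  refine tanh_add_sub_tanh_ne (x := τ * k) hτ ?_ ?_
  · rw [show 2 * (τ * k) + τ = τ * (2 * k + 1) by ring]
    exact mul_ne_zero hτ hk
  · rw [← hε]
    linear_combination -h

/-- each quad of the discrete pseudosphere is concircular: the four
vertices are coplanar (plane with normal `w`, also containing the center `c`) and
equidistant from the common point `c`. -/
theorem stmt_2 (ε φ : ℝ) (hε0 : 0 < ε) (hε2 : ε < 2)
    (τ : ℝ) (hτ : τ = Real.log ((2 + ε) / (2 - ε))) (k ℓ : ℤ) :
    ∃ (c w : Fin 3 → ℝ) (r : ℝ), w ≠ 0 ∧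
      dot3 (fPseudo ε φ τ k ℓ - c) (fPseudo ε φ τ k ℓ - c) = r ^ 2 ∧
      dot3 (fPseudo ε φ τ (k + 1) ℓ - c) (fPseudo ε φ τ (k + 1) ℓ - c) = r ^ 2 ∧
      dot3 (fPseudo ε φ τ k (ℓ + 1) - c) (fPseudo ε φ τ k (ℓ + 1) - c) = r ^ 2 ∧
      dot3 (fPseudo ε φ τ (k + 1) (ℓ + 1) - c) (fPseudo ε φ τ (k + 1) (ℓ + 1) - c) = r ^ 2 ∧
      dot3 w (fPseudo ε φ τ (k + 1) ℓ - fPseudo ε φ τ k ℓ) = 0 ∧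
      dot3 w (fPseudo ε φ τ k (ℓ + 1) - fPseudo ε φ τ k ℓ) = 0 ∧
      dot3 w (fPseudo ε φ τ (k + 1) (ℓ + 1) - fPseudo ε φ τ k ℓ) = 0 ∧
      dot3 w (c - fPseudo ε φ τ k ℓ) = 0 := by
  have hq : 0 < (2 + ε) / (2 - ε) := div_pos (by linarith) (by linarith)
  have hexp : exp τ = (2 + ε) / (2 - ε) := by rw [hτ, exp_log hq]
  have hτ0 : τ ≠ 0 := by
    rw [hτ]; exact (log_pos ((one_lt_div (by linarith)).mpr (by linarith))).ne'
  have hε : ε = 2 * (exp τ - 1) / (exp τ + 1) := by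
    have : 2 - ε ≠ 0 := by linarith
    rw [hexp]; field_simp; ring
  -- `fPseudo ε φ τ k ℓ` unfolds to `revolve (ε * k - tanh (τ * k)) (1 / cosh (τ * k)) (ℓ * φ)`.
  exact concircular_revolve _ _ _ _ _ _ (profile_succ_ne hτ0 hε k).symm
end

section
/- For the discrete pseudosphere f(k,ℓ) = (εk − tanh(τk), cos(ℓφ)·sech(τk), sin(ℓφ)·sech(τk)) with normals n(k,ℓ) = (sech(τk), cos(ℓφ)·tanh(τk), sin(ℓφ)·tanh(τk)), where τ = log((2+ε)/(2−ε)) and 0 < ε < 2, φ ∈ (0,π), the discrete Gauss curvature of each quad, K = det(n₁₂−n, n₂−n₁, N) / det(f₁₂−f, f₂−f₁, N), equals −1 for any unit vector N perpendicular to both n₁₂−n and n₂−n₁ with nonzero denominator. -/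
/-- `3×3` determinant of three vectors of `ℝ³`. -/
def det3 (u v w : Fin 3 → ℝ) : ℝ :=
  Matrix.det !![u 0, v 0, w 0; u 1, v 1, w 1; u 2, v 2, w 2]

/-- Its Gauss map. -/
noncomputable def nPseudo (φ τ : ℝ) (k ℓ : ℤ) : Fin 3 → ℝ :=
  ![1 / Real.cosh (τ * k),
    Real.cos (ℓ * φ) * Real.tanh (τ * k),
    Real.sin (ℓ * φ) * Real.tanh (τ * k)]

/-!
Since `det3 u v N = N ⬝ᵥ (u ⨯₃ v)`, it suffices that the diagonals of the Gauss-map quad have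
cross product opposite to that of the diagonals of the surface quad, whatever `N` is.
For a discrete surface of revolution with meridian data `(z, r)` and normal data `(p, q)`, the
axial components of these cross products are `(r₁² - r₀²) sin (θ₁ - θ₀)` and
`(q₁² - q₀²) sin (θ₁ - θ₀)`, and the other components are proportional to `(z₁ - z₀) (r₀ + r₁)`
and `(p₀ - p₁) (q₀ + q₁)` with the same factors. For the pseudosphere `r = p = sech` and
`q = tanh`: the axial components cancel since `sech² + tanh² = 1`, and the others since
`ε (cosh a + cosh (a + τ)) = 2 (sinh (a + τ) - sinh a)`, i.e. `ε = 2 tanh (τ / 2)`, which is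
exactly the choice `τ = log ((2 + ε) / (2 - ε))`.
-/

open Matrix Real

theorem det3_eq_dotProduct_cross (u v w : Fin 3 → ℝ) : det3 u v w = w ⬝ᵥ u ⨯₃ v := by
  simp only [det3, det_fin_three, cross_apply, dotProduct, Fin.sum_univ_three, of_apply,
    cons_val_zero, cons_val_one, cons_val_two, head_cons, tail_cons]
  ring

noncomputable def revolutionPoint (z r θ : ℝ) : Fin 3 → ℝ := ![z, r * cos θ, r * sin θ]

theorem cross_diagonals_revolutionPoint {z₀ z₁ r₀ r₁ p₀ p₁ q₀ q₁ : ℝ} (θ₀ θ₁ : ℝ)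
    (hradius : r₀ ^ 2 + q₀ ^ 2 = r₁ ^ 2 + q₁ ^ 2)
    (hheight : (z₁ - z₀) * (r₀ + r₁) = (p₀ - p₁) * (q₀ + q₁)) :
    (revolutionPoint p₁ q₁ θ₁ - revolutionPoint p₀ q₀ θ₀) ⨯₃
        (revolutionPoint p₀ q₀ θ₁ - revolutionPoint p₁ q₁ θ₀) =
      -((revolutionPoint z₁ r₁ θ₁ - revolutionPoint z₀ r₀ θ₀) ⨯₃
        (revolutionPoint z₀ r₀ θ₁ - revolutionPoint z₁ r₁ θ₀)) := by
  ext i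
  fin_cases i <;>
    simp only [cross_apply, revolutionPoint, Pi.neg_apply, Pi.sub_apply, Fin.zero_eta, Fin.mk_one,
      Fin.reduceFinMk, cons_val_zero, cons_val_one, cons_val_two, head_cons, tail_cons]
  · linear_combination (cos θ₁ * sin θ₀ - cos θ₀ * sin θ₁) * hradius
  · linear_combination (sin θ₀ - sin θ₁) * hheight
  · linear_combination (cos θ₁ - cos θ₀) * hheight

theorem sech_sq_add_tanh_sq (x : ℝ) : (1 / cosh x) ^ 2 + tanh x ^ 2 = 1 := by
  rw [tanh_eq_sinh_div_cosh]
  field_simp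
  linear_combination -cosh_sq_sub_sinh_sq x

theorem mul_one_add_cosh_eq_two_mul_sinh {ε τ : ℝ} (h₀ : -2 < ε) (h₂ : ε < 2)
    (hτ : τ = log ((2 + ε) / (2 - ε))) : ε * (1 + cosh τ) = 2 * sinh τ := by
  have hexp : exp τ = (2 + ε) / (2 - ε) := by
    rw [hτ, exp_log (div_pos (by linarith) (by linarith))]
  have h2 : (2 - ε) ≠ 0 := by linarith
  have h2' : (2 + ε) ≠ 0 := by linarith
  rw [cosh_eq, sinh_eq, exp_neg, hexp]
  field_simp
  ring

theorem pseudosphere_meridian_step {ε τ : ℝ} (h : ε * (1 + cosh τ) = 2 * sinh τ) (a : ℝ) :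
    (ε - tanh (a + τ) + tanh a) * (1 / cosh a + 1 / cosh (a + τ)) =
      (1 / cosh a - 1 / cosh (a + τ)) * (tanh a + tanh (a + τ)) := by
  have h' : ε * sinh τ = 2 * (cosh τ - 1) := by
    have hpos : 0 < 1 + cosh τ := by linarith [cosh_pos τ]
    refine mul_left_cancel₀ hpos.ne' ?_
    linear_combination sinh τ * h - 2 * cosh_sq_sub_sinh_sq τ
  have hsum : ε * (cosh a + cosh (a + τ)) = 2 * (sinh (a + τ) - sinh a) := by
    rw [sinh_add, cosh_add]
    linear_combination cosh a * h + sinh a * h'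
  have hca := (cosh_pos a).ne'
  have hcb := (cosh_pos (a + τ)).ne'
  rw [tanh_eq_sinh_div_cosh, tanh_eq_sinh_div_cosh]
  field_simp
  linear_combination cosh a * cosh (a + τ) * hsum

theorem fPseudo_eq_revolutionPoint (ε φ τ : ℝ) (k ℓ : ℤ) :
    fPseudo ε φ τ k ℓ = revolutionPoint (ε * k - tanh (τ * k)) (1 / cosh (τ * k)) (ℓ * φ) := by
  ext i
  fin_cases i <;> simp [fPseudo, revolutionPoint, mul_comm]

theorem nPseudo_eq_revolutionPoint (φ τ : ℝ) (k ℓ : ℤ) :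
    nPseudo φ τ k ℓ = revolutionPoint (1 / cosh (τ * k)) (tanh (τ * k)) (ℓ * φ) := by
  ext i
  fin_cases i <;> simp [nPseudo, revolutionPoint, mul_comm]

theorem cross_diagonals_nPseudo {ε τ : ℝ} (h : ε * (1 + cosh τ) = 2 * sinh τ) (φ : ℝ) (k ℓ : ℤ) :
    (nPseudo φ τ (k + 1) (ℓ + 1) - nPseudo φ τ k ℓ) ⨯₃
        (nPseudo φ τ k (ℓ + 1) - nPseudo φ τ (k + 1) ℓ) =
      -((fPseudo ε φ τ (k + 1) (ℓ + 1) - fPseudo ε φ τ k ℓ) ⨯₃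
        (fPseudo ε φ τ k (ℓ + 1) - fPseudo ε φ τ (k + 1) ℓ)) := by
  simp only [fPseudo_eq_revolutionPoint, nPseudo_eq_revolutionPoint, Int.cast_add, Int.cast_one,
    mul_add_one τ]
  refine cross_diagonals_revolutionPoint _ _ ?_ ?_
  · rw [sech_sq_add_tanh_sq, sech_sq_add_tanh_sq]
  · linear_combination pseudosphere_meridian_step h (τ * k)

theorem stmt_5_general (ε φ : ℝ) (hε0 : 0 < ε) (hε2 : ε < 2)
    (τ : ℝ) (hτ : τ = Real.log ((2 + ε) / (2 - ε))) (k ℓ : ℤ)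
    (N : Fin 3 → ℝ)
    (hden : det3 (fPseudo ε φ τ (k + 1) (ℓ + 1) - fPseudo ε φ τ k ℓ)
      (fPseudo ε φ τ k (ℓ + 1) - fPseudo ε φ τ (k + 1) ℓ) N ≠ 0) :
    det3 (nPseudo φ τ (k + 1) (ℓ + 1) - nPseudo φ τ k ℓ)
        (nPseudo φ τ k (ℓ + 1) - nPseudo φ τ (k + 1) ℓ) N /
      det3 (fPseudo ε φ τ (k + 1) (ℓ + 1) - fPseudo ε φ τ k ℓ)
        (fPseudo ε φ τ k (ℓ + 1) - fPseudo ε φ τ (k + 1) ℓ) N = -1 := by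
  have hτ' := mul_one_add_cosh_eq_two_mul_sinh (by linarith) hε2 hτ
  rw [det3_eq_dotProduct_cross, cross_diagonals_nPseudo hτ', dotProduct_neg,
    ← det3_eq_dotProduct_cross, neg_div, div_self hden]

/-- the discrete Gauss curvature of each quad of the discrete
pseudosphere equals `−1`, for any admissible face normal `N`. -/
theorem stmt_5 (ε φ : ℝ) (hε0 : 0 < ε) (hε2 : ε < 2) (hφ0 : 0 < φ) (hφπ : φ < Real.pi)
    (τ : ℝ) (hτ : τ = Real.log ((2 + ε) / (2 - ε))) (k ℓ : ℤ)
    (N : Fin 3 → ℝ) (hNunit : dot3 N N = 1)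
    (hN1 : dot3 N (nPseudo φ τ (k + 1) (ℓ + 1) - nPseudo φ τ k ℓ) = 0)
    (hN2 : dot3 N (nPseudo φ τ k (ℓ + 1) - nPseudo φ τ (k + 1) ℓ) = 0)
    (hden : det3 (fPseudo ε φ τ (k + 1) (ℓ + 1) - fPseudo ε φ τ k ℓ)
      (fPseudo ε φ τ k (ℓ + 1) - fPseudo ε φ τ (k + 1) ℓ) N ≠ 0) :
    det3 (nPseudo φ τ (k + 1) (ℓ + 1) - nPseudo φ τ k ℓ)
        (nPseudo φ τ k (ℓ + 1) - nPseudo φ τ (k + 1) ℓ) N /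
      det3 (fPseudo ε φ τ (k + 1) (ℓ + 1) - fPseudo ε φ τ k ℓ)
        (fPseudo ε φ τ k (ℓ + 1) - fPseudo ε φ τ (k + 1) ℓ) N = -1 :=
  stmt_5_general ε φ hε0 hε2 τ hτ k ℓ N hden
end

section
/- Define U = [[cot(δᵤ/2)·H₁/H, iλ],[iλ, cot(δᵤ/2)·H/H₁]] and V = [[1, (i/λ)·tan(δᵥ/2)·H₂H],[(i/λ)·tan(δᵥ/2)/(H₂H), 1]] with H = e^{ih}. Then the zero-curvature (compatibility) condition V₁U = U₂V, holding for all λ ≠ 0 (where V₁ uses H₁, H₁₂ and U₂ uses H₂, H₁₂), implies the discrete Hirota equation: e^{i(h₁₂+h)} − e^{i(h₁+h₂)} = tan(δᵤ/2)·tan(δᵥ/2)·(1 − e^{i(h+h₁+h₁₂+h₂)}). -/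
open Complex Matrix

/-- The K-net Lax matrix `U`, depending on `δᵤ`, the vertex values `h, h₁` and the
spectral parameter `λ`, with `H = e^{ih}`, `H₁ = e^{ih₁}`. -/
noncomputable def Umat (δu h h1 : ℝ) (lam : ℂ) : Matrix (Fin 2) (Fin 2) ℂ :=
  !![Complex.cot (δu / 2) * (Complex.exp (I * h1) / Complex.exp (I * h)), I * lam;
     I * lam, Complex.cot (δu / 2) * (Complex.exp (I * h) / Complex.exp (I * h1))]

/-- The K-net Lax matrix `V`, depending on `δᵥ`, the vertex values `h, h₂` and the
spectral parameter `λ`, with `H = e^{ih}`, `H₂ = e^{ih₂}`. -/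
noncomputable def Vmat (δv h h2 : ℝ) (lam : ℂ) : Matrix (Fin 2) (Fin 2) ℂ :=
  !![1, (I / lam) * Complex.tan (δv / 2) * (Complex.exp (I * h2) * Complex.exp (I * h));
     (I / lam) * Complex.tan (δv / 2) / (Complex.exp (I * h2) * Complex.exp (I * h)), 1]

/-! The `(0, 0)` entry of `V₁U = U₂V` does not depend on `λ`, and multiplied by
`tan(δᵤ/2) H H₂` it is exactly the discrete Hirota equation. -/

theorem Complex.cot_eq_inv_tan (z : ℂ) : Complex.cot z = (Complex.tan z)⁻¹ := by
  rw [Complex.cot_eq_cos_div_sin, Complex.tan_eq_sin_div_cos, inv_div]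

theorem Complex.I_div_mul_I_mul {lam : ℂ} (hlam : lam ≠ 0) : I / lam * (I * lam) = -1 := by
  field_simp
  exact I_sq

theorem Vmat_mul_Umat_zero_zero (δu δv h h1 h12 : ℝ) {lam : ℂ} (hlam : lam ≠ 0) :
    (Vmat δv h1 h12 lam * Umat δu h h1 lam) 0 0 =
      Complex.cot (δu / 2) * (Complex.exp (I * h1) / Complex.exp (I * h)) -
        Complex.tan (δv / 2) * (Complex.exp (I * h12) * Complex.exp (I * h1)) := by
  simp only [Vmat, Umat, Matrix.mul_apply, Fin.sum_univ_two, Matrix.of_apply, Matrix.cons_val',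
    Matrix.cons_val_zero, Matrix.cons_val_one, Matrix.empty_val', Matrix.cons_val_fin_one]
  linear_combination (tan (δv / 2) * (exp (I * h12) * exp (I * h1))) * I_div_mul_I_mul hlam

theorem Umat_mul_Vmat_zero_zero (δu δv h h2 h12 : ℝ) {lam : ℂ} (hlam : lam ≠ 0) :
    (Umat δu h2 h12 lam * Vmat δv h h2 lam) 0 0 =
      Complex.cot (δu / 2) * (Complex.exp (I * h12) / Complex.exp (I * h2)) -
        Complex.tan (δv / 2) / (Complex.exp (I * h2) * Complex.exp (I * h)) := by
  simp only [Vmat, Umat, Matrix.mul_apply, Fin.sum_univ_two, Matrix.of_apply, Matrix.cons_val',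
    Matrix.cons_val_zero, Matrix.cons_val_one, Matrix.empty_val', Matrix.cons_val_fin_one]
  linear_combination tan (δv / 2) / (exp (I * h2) * exp (I * h)) * I_div_mul_I_mul hlam

theorem hirota_of_zero_curvature_entry {K : Type*} [Field K] {tu tv H H1 H2 H12 : K}
    (htu : tu ≠ 0) (hH : H ≠ 0) (hH2 : H2 ≠ 0)
    (heq : tu⁻¹ * (H1 / H) - tv * (H12 * H1) = tu⁻¹ * (H12 / H2) - tv / (H2 * H)) :
    H12 * H - H1 * H2 = tu * tv * (1 - H * H1 * H12 * H2) := by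
  field_simp at heq
  linear_combination -heq

theorem stmt_8_general (h h1 h2 h12 δu δv : ℝ)
    (hu : Real.tan (δu / 2) ≠ 0)
    (hzc : ∀ lam : ℂ, lam ≠ 0 →
      Vmat δv h1 h12 lam * Umat δu h h1 lam = Umat δu h2 h12 lam * Vmat δv h h2 lam) :
    Complex.exp (I * (h12 + h)) - Complex.exp (I * (h1 + h2)) =
      Complex.tan ((δu : ℂ) / 2) * Complex.tan ((δv : ℂ) / 2) *
        (1 - Complex.exp (I * (h + h1 + h12 + h2))) := by
  have hentry := congrFun (congrFun (hzc 1 one_ne_zero) 0) 0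
  rw [Vmat_mul_Umat_zero_zero δu δv h h1 h12 one_ne_zero,
    Umat_mul_Vmat_zero_zero δu δv h h2 h12 one_ne_zero, Complex.cot_eq_inv_tan] at hentry
  have htu : Complex.tan ((δu : ℂ) / 2) ≠ 0 := by
    rw [← Complex.ofReal_ofNat, ← Complex.ofReal_div, ← Complex.ofReal_tan]
    exact_mod_cast hu
  simp only [mul_add, Complex.exp_add]
  exact hirota_of_zero_curvature_entry htu (Complex.exp_ne_zero _) (Complex.exp_ne_zero _) hentry

/-- the zero-curvature condition `V₁U = U₂V` for all `λ ≠ 0` implies the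
discrete Hirota equation. -/
theorem stmt_8 (h h1 h2 h12 δu δv : ℝ)
    (hu : Real.tan (δu / 2) ≠ 0) (hv : Real.tan (δv / 2) ≠ 0)
    (hcu : Real.cos (δu / 2) ≠ 0) (hcv : Real.cos (δv / 2) ≠ 0)
    (hsu : Real.sin (δu / 2) ≠ 0)
    (hzc : ∀ lam : ℂ, lam ≠ 0 →
      Vmat δv h1 h12 lam * Umat δu h h1 lam = Umat δu h2 h12 lam * Vmat δv h h2 lam) :
    Complex.exp (I * (h12 + h)) - Complex.exp (I * (h1 + h2)) =
      Complex.tan ((δu : ℂ) / 2) * Complex.tan ((δv : ℂ) / 2) *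
        (1 - Complex.exp (I * (h + h1 + h12 + h2))) :=
  stmt_8_general h h1 h2 h12 δu δv hu hzc
end

section
/- The gauge transformation G = diag(√s, 1/√s) applied to the cK-net Lax matrix L yields G₁⁻¹ L G = [[l·(cot(δ₁/2)/√(s₁s) + tan(δ₁/2)·√(s₁s)), i·λ/√(s₁s) − i·√(s₁s)/λ],[i·λ·√(s₁s) − i/(λ·√(s₁s)), (1/l)·(cot(δ₁/2)·√(s₁s) + tan(δ₁/2)/√(s₁s))]], i.e., the conjugated matrix depends on the vertex variables only through the product s₁s. -/
open Complex Matrix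

theorem Matrix.diag_mul_mul_diag_fin_two {R : Type*} [CommSemiring R] (a a' b b' p q r t : R) :
    !![a, 0; 0, a'] * !![p, q; r, t] * !![b, 0; 0, b'] =
      !![a * p * b, a * q * b'; a' * r * b, a' * t * b'] := by
  simp [mul_assoc]

theorem Matrix.inv_diag_inv_fin_two {K : Type*} [Field K] {a : K} (ha : a ≠ 0) :
    (!![a, 0; 0, a⁻¹] : Matrix (Fin 2) (Fin 2) K)⁻¹ = !![a⁻¹, 0; 0, a] :=
  Matrix.inv_eq_left_inv <| by simp [ha, Matrix.one_fin_two]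

theorem stmt_18_general (s s₁ l lam δ₁ : ℂ) (ss ss₁ : ℂ)
    (hs : s ≠ 0) (hs₁ : s₁ ≠ 0)
    (hss : ss ^ 2 = s) (hss₁ : ss₁ ^ 2 = s₁) :
    (!![ss₁, 0; 0, ss₁⁻¹] : Matrix (Fin 2) (Fin 2) ℂ)⁻¹ *
      (!![Complex.cot (δ₁ / 2) * (l / s) + Complex.tan (δ₁ / 2) * l * s₁,
          I * (lam - s * s₁ / lam);
          I * (lam - 1 / (lam * s * s₁)),
          Complex.cot (δ₁ / 2) * (s / l) + Complex.tan (δ₁ / 2) / (l * s₁)]) *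
      !![ss, 0; 0, ss⁻¹] =
    !![l * (Complex.cot (δ₁ / 2) / (ss₁ * ss) + Complex.tan (δ₁ / 2) * (ss₁ * ss)),
       I * lam / (ss₁ * ss) - I * (ss₁ * ss) / lam;
       I * lam * (ss₁ * ss) - I / (lam * (ss₁ * ss)),
       (1 / l) * (Complex.cot (δ₁ / 2) * (ss₁ * ss) + Complex.tan (δ₁ / 2) / (ss₁ * ss))] := by
  subst hss hss₁
  have hss : ss ≠ 0 := ne_zero_pow two_ne_zero hs
  have hss₁ : ss₁ ≠ 0 := ne_zero_pow two_ne_zero hs₁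
  rw [Matrix.inv_diag_inv_fin_two hss₁, Matrix.diag_mul_mul_diag_fin_two]
  simp only [EmbeddingLike.apply_eq_iff_eq, Matrix.vecCons_inj, and_true]
  refine ⟨⟨?_, ?_⟩, ?_, ?_⟩ <;> field_simp

/-- the gauge transformation `G = diag(√s, 1/√s)` applied to the cK-net
Lax matrix `L` yields a matrix depending on the vertex variables only through the
product `s₁ s`. Here `ss` and `ss₁` denote the chosen square roots of `s` and `s₁`. -/
theorem stmt_18 (s s₁ l lam δ₁ : ℂ) (ss ss₁ : ℂ)
    (hs : s ≠ 0) (hs₁ : s₁ ≠ 0) (hl : l ≠ 0) (hlam : lam ≠ 0)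
    (hss : ss ^ 2 = s) (hss₁ : ss₁ ^ 2 = s₁)
    (hcos : Complex.cos (δ₁ / 2) ≠ 0) (hsin : Complex.sin (δ₁ / 2) ≠ 0) :
    (!![ss₁, 0; 0, ss₁⁻¹] : Matrix (Fin 2) (Fin 2) ℂ)⁻¹ *
      (!![Complex.cot (δ₁ / 2) * (l / s) + Complex.tan (δ₁ / 2) * l * s₁,
          I * (lam - s * s₁ / lam);
          I * (lam - 1 / (lam * s * s₁)),
          Complex.cot (δ₁ / 2) * (s / l) + Complex.tan (δ₁ / 2) / (l * s₁)]) *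
      !![ss, 0; 0, ss⁻¹] =
    !![l * (Complex.cot (δ₁ / 2) / (ss₁ * ss) + Complex.tan (δ₁ / 2) * (ss₁ * ss)),
       I * lam / (ss₁ * ss) - I * (ss₁ * ss) / lam;
       I * lam * (ss₁ * ss) - I / (lam * (ss₁ * ss)),
       (1 / l) * (Complex.cot (δ₁ / 2) * (ss₁ * ss) + Complex.tan (δ₁ / 2) / (ss₁ * ss))] :=
  stmt_18_general s s₁ l lam δ₁ ss ss₁ hs hs₁ hss hss₁
end
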